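/- Assume 0 ≤ p, q ≤ 1 with (p,q) ≠ (0,0) and s = 1/(p+q). Then the function (A,B) ↦ λ_min((A^{p/2} B^q A^{p/2})^s), defined on pairs of positive definite n×n matrices, is jointly concave, where λ_min denotes the smallest eigenvalue. -/

import Mathlib

/-! The function `g (A, B) = λ_min (A^{p/2} B^q A^{p/2}) ^ (1/(p+q))` is positive and positively
homogeneous of degree one on pairs of positive definite matrices, so it is concave as soon as its
superlevel set `{g ≥ 1}` is convex. Since `λ_min M ≥ 1` iff `M ≥ 1`, conjugating by `A^{-p/2}`
identifies that set with `{A^{-p} ≤ B^q}`, which is convex because `A ↦ A^{-p}` is operator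
convex (operator concavity of `x^p` composed with the antitone, operator convex inverse) and
`B ↦ B^q` is operator concave. -/

open Matrix
open scoped ComplexOrder

/-- Real power of a Hermitian matrix via the spectral theorem (junk value `0` on
non-Hermitian input). -/
noncomputable def mpow {n : Type*} [Fintype n] [DecidableEq n] (A : Matrix n n ℂ) (p : ℝ) :
    Matrix n n ℂ :=
  if hA : A.IsHermitian then
    (hA.eigenvectorUnitary : Matrix n n ℂ) *
      Matrix.diagonal (fun i => ((hA.eigenvalues i ^ p : ℝ) : ℂ)) *
      star (hA.eigenvectorUnitary : Matrix n n ℂ)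
  else 0

/-- Loewner order: `loewner A B` iff `B - A` is positive semidefinite. -/
def loewner {n : Type*} [Fintype n] (A B : Matrix n n ℂ) : Prop := (B - A).PosSemidef

/-- Smallest eigenvalue of a Hermitian matrix (junk value `0` on non-Hermitian input). -/
noncomputable def lambdaMin {n : Type*} [Fintype n] [DecidableEq n] (A : Matrix n n ℂ) : ℝ :=
  if hA : A.IsHermitian then ⨅ i, hA.eigenvalues i else 0

/-- Largest eigenvalue of a Hermitian matrix; for positive definite `A` this is the
operator norm `‖A‖∞` (junk value `0` on non-Hermitian input). -/
noncomputable def lambdaMax {n : Type*} [Fintype n] [DecidableEq n] (A : Matrix n n ℂ) : ℝ :=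
  if hA : A.IsHermitian then ⨆ i, hA.eigenvalues i else 0

/-- The `j`-th smallest eigenvalue (counted with multiplicity, increasing order)
of a Hermitian matrix. -/
noncomputable def eigUp {k : ℕ} (A : Matrix (Fin k) (Fin k) ℂ) (j : Fin k) : ℝ :=
  if hA : A.IsHermitian then (hA.eigenvalues ∘ Tuple.sort hA.eigenvalues) j else 0

/-- The `j`-th largest eigenvalue of a Hermitian matrix. -/
noncomputable def eigDown {k : ℕ} (A : Matrix (Fin k) (Fin k) ℂ) (j : Fin k) : ℝ :=
  eigUp A j.rev

open scoped MatrixOrder Matrix.Norms.L2Operator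

theorem concaveOn_of_homogeneous_of_convex_superlevel {E : Type*} [AddCommMonoid E]
    [Module ℝ E] {C : Set E} {g : E → ℝ} (hC_smul : ∀ x ∈ C, ∀ c : ℝ, 0 < c → c • x ∈ C)
    (hg_pos : ∀ x ∈ C, 0 < g x) (hg_smul : ∀ x ∈ C, ∀ c : ℝ, 0 < c → g (c • x) = c * g x)
    (hsuper : Convex ℝ {x ∈ C | 1 ≤ g x}) : ConcaveOn ℝ C g := by
  have normalize : ∀ x ∈ C, (g x)⁻¹ • x ∈ {x ∈ C | 1 ≤ g x} := fun x hx =>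
    ⟨hC_smul x hx _ (inv_pos.2 (hg_pos x hx)),
      by rw [hg_smul x hx _ (inv_pos.2 (hg_pos x hx)), inv_mul_cancel₀ (hg_pos x hx).ne']⟩
  suffices key : ∀ x ∈ C, ∀ y ∈ C, ∀ a b : ℝ, 0 ≤ a → 0 ≤ b → a + b = 1 →
      a • x + b • y ∈ C ∧ a * g x + b * g y ≤ g (a • x + b • y) from
    ⟨fun x hx y hy a b ha hb hab => (key x hx y hy a b ha hb hab).1,
      fun x hx y hy a b ha hb hab => (key x hx y hy a b ha hb hab).2⟩
  intro x hx y hy a b ha hb hab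
  have hx₀ := hg_pos x hx
  have hy₀ := hg_pos y hy
  set τ := a * g x + b * g y
  have hτ : 0 < τ := by
    rcases ha.eq_or_lt with rfl | ha
    · simp only [zero_add] at hab
      simpa [τ, hab] using hy₀
    · positivity
  -- `a • x + b • y` is `τ` times a convex combination of the points rescaled onto `g = 1`.
  obtain ⟨hzC, hz⟩ := hsuper (normalize x hx) (normalize y hy)
    (div_nonneg (mul_nonneg ha hx₀.le) hτ.le) (div_nonneg (mul_nonneg hb hy₀.le) hτ.le)
    (by rw [← add_div, div_self hτ.ne'])
  have hcomb : a • x + b • y =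
      τ • ((a * g x / τ) • (g x)⁻¹ • x + (b * g y / τ) • (g y)⁻¹ • y) := by
    simp only [smul_add, smul_smul]
    congr 2 <;> field_simp
  rw [hcomb]
  refine ⟨hC_smul _ hzC τ hτ, ?_⟩
  rw [hg_smul _ hzC τ hτ]
  exact le_mul_of_one_le_right hτ.le hz

namespace CFC

variable {A : Type*} [CStarAlgebra A] [PartialOrder A] [StarOrderedRing A]

lemma smul_rpow {a : A} {c y : ℝ} (hc : 0 ≤ c) (hy : 0 ≤ y) (ha : 0 ≤ a := by cfc_tac) :
    (c • a) ^ y = c ^ y • a ^ y := by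
  have hcont : Continuous fun x : ℝ => x ^ y := Real.continuous_rpow_const hy
  rw [rpow_eq_cfc_real (smul_nonneg hc ha), rpow_eq_cfc_real ha, ← cfc_const_mul_id c a,
    ← cfc_comp' (fun x => x ^ y) (fun x => c * x) a, ← cfc_smul _ _ _ hcont.continuousOn]
  refine cfc_congr fun x hx => ?_
  rw [smul_eq_mul, Real.mul_rpow hc (spectrum_nonneg_of_nonneg ha hx)]

lemma rpow_mul_mul_rpow_nonneg (a b : A) (x y : ℝ) : 0 ≤ a ^ x * b ^ y * a ^ x :=
  rpow_nonneg.isSelfAdjoint.conjugate_nonneg rpow_nonneg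

lemma isStrictlyPositive_rpow_mul_mul_rpow {a b : A} (ha : IsStrictlyPositive a)
    (hb : IsStrictlyPositive b) (x y : ℝ) : IsStrictlyPositive (a ^ x * b ^ y * a ^ x) := by
  cfc_tac

lemma smul_rpow_mul_mul_smul_rpow {a b : A} {c x y : ℝ} (hc : 0 ≤ c) (hx : 0 ≤ x) (hy : 0 ≤ y)
    (ha : 0 ≤ a := by cfc_tac) (hb : 0 ≤ b := by cfc_tac) :
    (c • a) ^ (x / 2) * (c • b) ^ y * (c • a) ^ (x / 2) =
      c ^ (x + y) • (a ^ (x / 2) * b ^ y * a ^ (x / 2)) := by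
  have hx2 : 0 ≤ x / 2 := by positivity
  rw [smul_rpow hc hx2, smul_rpow hc hy, smul_mul_smul_comm, smul_mul_smul_comm,
    ← Real.rpow_add_of_nonneg hc hx2 hy, ← Real.rpow_add_of_nonneg hc (by positivity) hx2]
  ring_nf

lemma one_le_rpow_mul_mul_rpow_iff {a b : A} (ha : IsStrictlyPositive a) (x : ℝ) :
    1 ≤ a ^ (x / 2) * b * a ^ (x / 2) ↔ a ^ (-x) ≤ b := by
  have hself (y : ℝ) : IsSelfAdjoint (a ^ y) := rpow_nonneg.isSelfAdjoint
  have hmul (y z : ℝ) : a ^ y * a ^ z = a ^ (y + z) := (rpow_add ha.isUnit).symm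
  constructor
  · intro h
    calc a ^ (-x) = a ^ (-(x / 2)) * 1 * a ^ (-(x / 2)) := by rw [mul_one, hmul]; ring_nf
      _ ≤ _ := (hself (-(x / 2))).conjugate_le_conjugate h
      _ = b := by
        rw [← mul_assoc, ← mul_assoc, hmul, mul_assoc, hmul]
        simp [rpow_zero a ha.nonneg]
  · intro h
    calc (1 : A) = a ^ (x / 2) * a ^ (-x) * a ^ (x / 2) := by
          rw [hmul, hmul, ← rpow_zero a ha.nonneg]; ring_nf
      _ ≤ _ := (hself (x / 2)).conjugate_le_conjugate h

lemma image_rpow_setOf_isStrictlyPositive {p : ℝ} (hp : p ≠ 0) :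
    (fun a : A => a ^ p) '' {a | IsStrictlyPositive a} = {a | IsStrictlyPositive a} := by
  ext b
  constructor
  · rintro ⟨a, ha, rfl⟩
    exact IsStrictlyPositive.rpow a p ha
  · intro hb
    exact ⟨b ^ p⁻¹, IsStrictlyPositive.rpow b p⁻¹ hb, rpow_inv_rpow b p hp hb⟩

lemma convexOn_rpow_neg {p : ℝ} (hp : p ∈ Set.Icc 0 1) :
    ConvexOn ℝ {a : A | IsStrictlyPositive a} (fun a => a ^ (-p)) := by
  have hconvex := (CStarAlgebra.convexOn_ringInverse (A := A)).1
  rcases hp.1.eq_or_lt with rfl | hp₀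
  · exact (convexOn_const 1 hconvex).congr fun a ha => by simp [rpow_zero a ha.nonneg]
  have hconcave : ConcaveOn ℝ {a : A | IsStrictlyPositive a} (fun a => a ^ p) :=
    (concaveOn_rpow hp).subset (fun a ha => ha.nonneg) hconvex
  have himage := image_rpow_setOf_isStrictlyPositive (A := A) hp₀.ne'
  have hinv := CStarAlgebra.convexOn_ringInverse (A := A)
  rw [← himage] at hinv
  refine (hinv.comp_concaveOn hconcave ?_).congr fun a ha => inverse_rpow a p hp₀.ne' ha
  rw [himage]
  exact CStarAlgebra.antitoneOn_ringInverse

lemma convex_setOf_rpow_neg_le_rpow {p q : ℝ} (hp : p ∈ Set.Icc 0 1) (hq : q ∈ Set.Icc 0 1) :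
    Convex ℝ
      {x : A × A | IsStrictlyPositive x.1 ∧ IsStrictlyPositive x.2 ∧ x.1 ^ (-p) ≤ x.2 ^ q} := by
  have hconvex := (CStarAlgebra.convexOn_ringInverse (A := A)).1
  rintro x ⟨hx₁, hx₂, hx⟩ y ⟨hy₁, hy₂, hy⟩ a b ha hb hab
  refine ⟨hconvex hx₁ hy₁ ha hb hab, hconvex hx₂ hy₂ ha hb hab, ?_⟩
  calc (a • x.1 + b • y.1) ^ (-p) ≤ a • x.1 ^ (-p) + b • y.1 ^ (-p) :=
        (convexOn_rpow_neg hp).2 hx₁ hy₁ ha hb hab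
    _ ≤ a • x.2 ^ q + b • y.2 ^ q := by gcongr
    _ ≤ (a • x.2 + b • y.2) ^ q := (concaveOn_rpow hq).2 hx₂.nonneg hy₂.nonneg ha hb hab

end CFC

section lambdaMin

variable {n : Type*} [Fintype n] [DecidableEq n]

lemma mpow_eq_rpow {A : Matrix n n ℂ} (hA : 0 ≤ A) (r : ℝ) : mpow A r = A ^ r := by
  have hH : A.IsHermitian := hA.isSelfAdjoint
  rw [mpow, dif_pos hH, CFC.rpow_eq_cfc_real hA, hH.cfc_eq]
  rfl

lemma lambdaMin_of_isEmpty [IsEmpty n] (X : Matrix n n ℂ) : lambdaMin X = 0 := by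
  unfold lambdaMin
  split_ifs <;> simp [Real.iInf_of_isEmpty]

variable [Nonempty n]

lemma isLeast_lambdaMin {X : Matrix n n ℂ} (hX : IsSelfAdjoint X) :
    IsLeast (spectrum ℝ X) (lambdaMin X) := by
  have hH : X.IsHermitian := hX
  rw [hH.spectrum_real_eq_range_eigenvalues, lambdaMin, dif_pos hH]
  obtain ⟨i, hi⟩ := exists_eq_ciInf_of_finite (f := hH.eigenvalues)
  exact ⟨⟨i, hi⟩, fun _ ⟨j, hj⟩ => hj ▸ ciInf_le (Finite.bddBelow_range _) j⟩

lemma lambdaMin_cfc {X : Matrix n n ℂ} (hX : IsSelfAdjoint X) {f : ℝ → ℝ}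
    (hf : MonotoneOn f (spectrum ℝ X)) : lambdaMin (cfc f X) = f (lambdaMin X) := by
  refine (isLeast_lambdaMin (cfc_predicate f X)).unique ?_
  rw [cfc_map_spectrum f X hX (finite_real_spectrum.continuousOn f)]
  exact hf.map_isLeast (isLeast_lambdaMin hX)

lemma le_lambdaMin_iff {X : Matrix n n ℂ} (hX : IsSelfAdjoint X) {r : ℝ} :
    r ≤ lambdaMin X ↔ algebraMap ℝ (Matrix n n ℂ) r ≤ X := by
  rw [algebraMap_le_iff_le_spectrum]
  exact le_isGLB_iff (isLeast_lambdaMin hX).isGLB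

lemma lambdaMin_pos {X : Matrix n n ℂ} (hX : IsStrictlyPositive X) : 0 < lambdaMin X :=
  hX.spectrum_pos (isLeast_lambdaMin hX.isSelfAdjoint).1

lemma lambdaMin_smul {X : Matrix n n ℂ} (hX : IsSelfAdjoint X) {c : ℝ} (hc : 0 ≤ c) :
    lambdaMin (c • X) = c * lambdaMin X := by
  rw [← cfc_const_mul_id c X,
    lambdaMin_cfc hX fun x _ y _ hxy => mul_le_mul_of_nonneg_left hxy hc]

lemma lambdaMin_rpow {X : Matrix n n ℂ} (hX : 0 ≤ X) {s : ℝ} (hs : 0 ≤ s) :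
    lambdaMin (X ^ s) = lambdaMin X ^ s := by
  rw [CFC.rpow_eq_cfc_real hX, lambdaMin_cfc hX.isSelfAdjoint
    ((Real.monotoneOn_rpow_Ici_of_exponent_nonneg hs).mono
      fun x hx => spectrum_nonneg_of_nonneg hX hx)]

lemma lambdaMin_smul_rpow_mul_mul_smul_rpow {A B : Matrix n n ℂ} {c x y : ℝ} (hc : 0 ≤ c)
    (hx : 0 ≤ x) (hy : 0 ≤ y) (hA : 0 ≤ A) (hB : 0 ≤ B) :
    lambdaMin ((c • A) ^ (x / 2) * (c • B) ^ y * (c • A) ^ (x / 2)) =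
      c ^ (x + y) * lambdaMin (A ^ (x / 2) * B ^ y * A ^ (x / 2)) := by
  rw [CFC.smul_rpow_mul_mul_smul_rpow hc hx hy hA hB,
    lambdaMin_smul (CFC.rpow_mul_mul_rpow_nonneg A B _ _).isSelfAdjoint (by positivity)]

lemma one_le_lambdaMin_rpow_mul_mul_rpow_iff {A B : Matrix n n ℂ} (hA : IsStrictlyPositive A)
    (x y : ℝ) : 1 ≤ lambdaMin (A ^ (x / 2) * B ^ y * A ^ (x / 2)) ↔ A ^ (-x) ≤ B ^ y := by
  rw [← CFC.one_le_rpow_mul_mul_rpow_iff hA x, ← map_one (algebraMap ℝ (Matrix n n ℂ)),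
    le_lambdaMin_iff (CFC.rpow_mul_mul_rpow_nonneg A B _ _).isSelfAdjoint]

theorem concaveOn_lambdaMin_rpow_mul_mul_rpow_rpow_inv {p q : ℝ} (hp : p ∈ Set.Icc 0 1)
    (hq : q ∈ Set.Icc 0 1) (hpq : 0 < p + q) :
    ConcaveOn ℝ {AB : Matrix n n ℂ × Matrix n n ℂ | IsStrictlyPositive AB.1 ∧ IsStrictlyPositive AB.2}
      (fun AB => lambdaMin (AB.1 ^ (p / 2) * AB.2 ^ q * AB.1 ^ (p / 2)) ^ (p + q)⁻¹) := by
  have hpos (A B : Matrix n n ℂ) (hA : IsStrictlyPositive A) (hB : IsStrictlyPositive B) :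
      0 < lambdaMin (A ^ (p / 2) * B ^ q * A ^ (p / 2)) :=
    lambdaMin_pos (CFC.isStrictlyPositive_rpow_mul_mul_rpow hA hB _ _)
  have hsuper : {AB ∈ {AB : Matrix n n ℂ × Matrix n n ℂ |
        IsStrictlyPositive AB.1 ∧ IsStrictlyPositive AB.2} |
        1 ≤ lambdaMin (AB.1 ^ (p / 2) * AB.2 ^ q * AB.1 ^ (p / 2)) ^ (p + q)⁻¹} =
      {AB | IsStrictlyPositive AB.1 ∧ IsStrictlyPositive AB.2 ∧ AB.1 ^ (-p) ≤ AB.2 ^ q} := by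
    refine Set.ext fun ⟨A, B⟩ => ?_
    simp only [Set.mem_ofPred_eq, and_assoc]
    refine and_congr_right fun hA => and_congr_right fun hB => ?_
    rw [← one_le_lambdaMin_rpow_mul_mul_rpow_iff hA,
      ← Real.rpow_le_rpow_iff zero_le_one (hpos A B hA hB).le (inv_pos.2 hpq), Real.one_rpow]
  refine concaveOn_of_homogeneous_of_convex_superlevel ?_ ?_ ?_ ?_
  · rintro ⟨A, B⟩ ⟨hA, hB⟩ c hc
    exact ⟨hA.smul hc, hB.smul hc⟩
  · rintro ⟨A, B⟩ ⟨hA, hB⟩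
    exact Real.rpow_pos_of_pos (hpos A B hA hB) _
  · rintro ⟨A, B⟩ ⟨hA, hB⟩ c hc
    rw [Prod.smul_mk, lambdaMin_smul_rpow_mul_mul_smul_rpow hc.le hp.1 hq.1 hA.nonneg hB.nonneg,
      Real.mul_rpow (by positivity) (hpos A B hA hB).le, ← Real.rpow_mul hc.le,
      mul_inv_cancel₀ hpq.ne', Real.rpow_one]
  · rw [hsuper]
    exact CFC.convex_setOf_rpow_neg_le_rpow hp hq

end lambdaMin

/-- Theorem 5.1(1) with `Φ = Ψ = id`: for `0 ≤ p, q ≤ 1`, `(p,q) ≠ (0,0)` and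
`s = 1/(p+q)`, the smallest-eigenvalue function
`(A,B) ↦ λ_min((A^{p/2} B^q A^{p/2})^s)` is jointly concave on positive definite pairs. -/
theorem stmt10 {n : Type*} [Fintype n] [DecidableEq n]
    (p q s : ℝ) (hp0 : 0 ≤ p) (hp1 : p ≤ 1) (hq0 : 0 ≤ q) (hq1 : q ≤ 1)
    (hpq : (p, q) ≠ (0, 0)) (hs : s = 1 / (p + q)) :
    ConcaveOn ℝ {AB : Matrix n n ℂ × Matrix n n ℂ | AB.1.PosDef ∧ AB.2.PosDef}
      (fun AB => lambdaMin (mpow (mpow AB.1 (p/2) * mpow AB.2 q * mpow AB.1 (p/2)) s)) := by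
  have hpq_pos : 0 < p + q := by
    by_contra! h
    exact hpq (Prod.ext (by linarith) (by linarith))
  rw [one_div] at hs
  subst hs
  have hS : {AB : Matrix n n ℂ × Matrix n n ℂ | AB.1.PosDef ∧ AB.2.PosDef} =
      {AB | IsStrictlyPositive AB.1 ∧ IsStrictlyPositive AB.2} := by
    simp only [isStrictlyPositive_iff_posDef]
  rcases isEmpty_or_nonempty n with hn | hn
  · have hconvex := (CStarAlgebra.convexOn_ringInverse (A := Matrix n n ℂ)).1
    simp only [lambdaMin_of_isEmpty]
    exact concaveOn_const 0 (hS ▸ hconvex.prod hconvex)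
  rw [hS]
  refine (concaveOn_lambdaMin_rpow_mul_mul_rpow_rpow_inv ⟨hp0, hp1⟩ ⟨hq0, hq1⟩ hpq_pos).congr ?_
  rintro ⟨A, B⟩ ⟨hA, hB⟩
  have hM := CFC.rpow_mul_mul_rpow_nonneg A B (p / 2) q
  dsimp only
  rw [mpow_eq_rpow hA.nonneg, mpow_eq_rpow hB.nonneg, mpow_eq_rpow hM,
    lambdaMin_rpow hM (inv_pos.2 hpq_pos).le]
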